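/- Apply the generalized CNOT U: |j,k⟩ ↦ |j, j⊕₃k⟩ on ℂ³⊗ℂ³ to the nine-state Bennett basis (as in the previous statement, where the first factor is control). Then the images of the first five states |ψ₁⟩,…,|ψ₅⟩ remain product states, while the images of |ψ₆⟩,…,|ψ₉⟩ are each entangled with entanglement entropy 1; hence the average entanglement entropy of the transformed equiprobable ensemble equals 4/9. -/

import Mathlib

noncomputable section

def ket {d : ℕ} (i : Fin d) : Fin d → ℂ := fun x => if x = i then 1 else 0

def tens {d₁ d₂ : ℕ} (u : Fin d₁ → ℂ) (v : Fin d₂ → ℂ) : Fin d₁ × Fin d₂ → ℂ :=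
  fun p => u p.1 * v p.2

def dens {n : Type*} (ψ : n → ℂ) : Matrix n n ℂ := Matrix.of fun x y => ψ x * star (ψ y)

def trSnd {d₁ d₂ : ℕ} (ρ : Matrix (Fin d₁ × Fin d₂) (Fin d₁ × Fin d₂) ℂ) :
    Matrix (Fin d₁) (Fin d₁) ℂ := Matrix.of fun j j' => ∑ k, ρ (j, k) (j', k)

def SvN {n : Type*} [Fintype n] [DecidableEq n] (ρ : Matrix n n ℂ) : ℝ :=
  if h : ρ.IsHermitian then -∑ i, h.eigenvalues i * Real.logb 2 (h.eigenvalues i) else 0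

/-- Entanglement entropy of a pure state of `ℂ³⊗ℂ³`. -/
def entEnt (ψ : Fin 3 × Fin 3 → ℂ) : ℝ := SvN (trSnd (dens ψ))

def pm (i j : Fin 3) (s : ℂ) : Fin 3 → ℂ := fun x =>
  if x = i then (Real.sqrt 2 : ℂ)⁻¹ else if x = j then s * (Real.sqrt 2 : ℂ)⁻¹ else 0

/-- The nine-state Bennett basis of `ℂ³⊗ℂ³`. -/
def bennett : Fin 9 → (Fin 3 × Fin 3 → ℂ) :=
  ![tens (ket 1) (ket 1),
    tens (ket 0) (pm 0 1 1), tens (ket 0) (pm 0 1 (-1)),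
    tens (ket 2) (pm 1 2 1), tens (ket 2) (pm 1 2 (-1)),
    tens (pm 1 2 1) (ket 0), tens (pm 1 2 (-1)) (ket 0),
    tens (pm 0 1 1) (ket 2), tens (pm 0 1 (-1)) (ket 2)]

/-- The generalized CNOT `|j,k⟩ ↦ |j, j⊕₃k⟩` on two qutrits (first factor is control). -/
def gcnot3 (ψ : Fin 3 × Fin 3 → ℂ) : Fin 3 × Fin 3 → ℂ := fun p => ψ (p.1, p.2 - p.1)

/-! `gcnot3` shifts the target by the value of the control. A basis-state control therefore
keeps the state a product `|j⟩ ⊗ v(· - j)`, while a target `|k⟩` under a control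
`(|a⟩ ± |a'⟩)/√2` gives `(|a, a+k⟩ ± |a', a'+k⟩)/√2`, whose reduced state is `diag(½, ½)` on
`{a, a'}`. Both entropies come from one fact: a Hermitian `ρ` with `ρ² = c ρ` has its spectrum
in `{0, c}`, so `S(ρ) = -tr ρ · log₂ c`. -/

open Matrix Polynomial

theorem Matrix.IsHermitian.eigenvalues_eq_zero_or_eq {n : Type*} [Fintype n] [DecidableEq n]
    {A : Matrix n n ℂ} (hA : A.IsHermitian) {c : ℝ} (hc : A * A = (c : ℂ) • A) (i : n) :
    hA.eigenvalues i = 0 ∨ hA.eigenvalues i = c := by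
  have : Nonempty n := ⟨i⟩
  have hroot := spectrum.subset_polynomial_aeval A (X ^ 2 - C c * X)
    ⟨_, hA.eigenvalues_mem_spectrum_real i, rfl⟩
  have hA0 : aeval A (X ^ 2 - C c * X : ℝ[X]) = 0 := by
    rw [map_sub, map_pow, map_mul, aeval_C, aeval_X, sq, hc, ← Algebra.smul_def, Complex.coe_smul,
      sub_self]
  rw [hA0, spectrum.zero_eq, Set.mem_singleton_iff] at hroot
  have : hA.eigenvalues i * (hA.eigenvalues i - c) = 0 := by
    simp only [eval_sub, eval_pow, eval_X, eval_mul, eval_C] at hroot; linear_combination hroot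
  simpa [sub_eq_zero] using this

theorem SvN_eq_of_mul_self_eq_smul {n : Type*} [Fintype n] [DecidableEq n] {ρ : Matrix n n ℂ}
    (hρ : ρ.IsHermitian) {c : ℝ} (hc : ρ * ρ = (c : ℂ) • ρ) :
    SvN ρ = -ρ.trace.re * Real.logb 2 c := by
  have hterm : ∀ i, hρ.eigenvalues i * Real.logb 2 (hρ.eigenvalues i) =
      hρ.eigenvalues i * Real.logb 2 c := by
    intro i
    rcases hρ.eigenvalues_eq_zero_or_eq hc i with h | h <;> simp [h]
  rw [SvN, dif_pos hρ, Finset.sum_congr rfl fun i _ => hterm i, ← Finset.sum_mul,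
    hρ.trace_eq_sum_eigenvalues]
  simp [← Complex.ofReal_sum]

theorem dens_isHermitian {n : Type*} (u : n → ℂ) : (dens u).IsHermitian := by
  ext x y
  simp [dens, mul_comm]

theorem dens_mul_self {n : Type*} [Fintype n] (u : n → ℂ) :
    dens u * dens u = (u ⬝ᵥ star u) • dens u := by
  ext x y
  simp only [dens, mul_apply, of_apply, Matrix.smul_apply, smul_eq_mul, dotProduct, Pi.star_apply,
    Finset.sum_mul]
  exact Finset.sum_congr rfl fun z _ => by ring

theorem trSnd_dens_tens {d₁ d₂ : ℕ} (u : Fin d₁ → ℂ) (v : Fin d₂ → ℂ) :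
    trSnd (dens (tens u v)) = (v ⬝ᵥ star v) • dens u := by
  ext x y
  simp only [trSnd, dens, tens, of_apply, Matrix.smul_apply, smul_eq_mul, dotProduct, Pi.star_apply,
    star_mul, Finset.sum_mul]
  exact Finset.sum_congr rfl fun z _ => by ring

theorem entEnt_tens {u v : Fin 3 → ℂ} (hu : u ⬝ᵥ star u = 1) (hv : v ⬝ᵥ star v = 1) :
    entEnt (tens u v) = 0 := by
  have hρ : trSnd (dens (tens u v)) = dens u := by rw [trSnd_dens_tens, hv, one_smul]
  rw [entEnt, hρ, SvN_eq_of_mul_self_eq_smul (dens_isHermitian u) (c := 1) (by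
    rw [dens_mul_self, hu, Complex.ofReal_one])]
  simp

theorem SvN_diagonal_eq_one {w : Fin 3 → ℝ} (hw : ∀ j, w j = 0 ∨ w j = 2⁻¹) (hsum : ∑ j, w j = 1) :
    SvN (diagonal fun j => (w j : ℂ)) = 1 := by
  have hherm : (diagonal fun j => (w j : ℂ)).IsHermitian :=
    isHermitian_diagonal_of_self_adjoint _ (by ext j; simp)
  have hsq : diagonal (fun j => (w j : ℂ)) * diagonal (fun j => (w j : ℂ)) =
      ((2⁻¹ : ℝ) : ℂ) • diagonal fun j => (w j : ℂ) := by
    rw [diagonal_mul_diagonal, ← diagonal_smul]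
    congr 1; ext j
    rcases hw j with h | h <;> simp [h]
  rw [SvN_eq_of_mul_self_eq_smul hherm hsq, trace_diagonal, ← Complex.ofReal_sum, hsum]
  simp [Real.logb_inv]

theorem gcnot3_tens_ket_left (j : Fin 3) (v : Fin 3 → ℂ) :
    gcnot3 (tens (ket j) v) = tens (ket j) fun l => v (l - j) := by
  ext ⟨x, l⟩
  by_cases h : x = j <;> simp [gcnot3, tens, ket, h]

theorem gcnot3_tens_ket_right_apply (u : Fin 3 → ℂ) (k j l : Fin 3) :
    gcnot3 (tens u (ket k)) (j, l) = if l = j + k then u j else 0 := by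
  simp [gcnot3, tens, ket, sub_eq_iff_eq_add']

theorem trSnd_dens_gcnot3_tens_ket (u : Fin 3 → ℂ) (k : Fin 3) :
    trSnd (dens (gcnot3 (tens u (ket k)))) = diagonal fun j => u j * star (u j) := by
  ext j j'
  simp only [trSnd, dens, of_apply, gcnot3_tens_ket_right_apply, diagonal_apply]
  by_cases h : j = j'
  · subst h; simp
  · simp [h]

theorem not_exists_tens_of_apply {ψ : Fin 3 × Fin 3 → ℂ} {a a' b b' : Fin 3}
    (h₁ : ψ (a, b) ≠ 0) (h₂ : ψ (a', b') ≠ 0) (h₃ : ψ (a, b') = 0) :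
    ¬ ∃ u v : Fin 3 → ℂ, ψ = tens u v := by
  rintro ⟨u, v, rfl⟩
  simp only [tens, ne_eq, mul_eq_zero, not_or] at h₁ h₂ h₃
  tauto

theorem ket_dotProduct_star (j : Fin 3) : ket j ⬝ᵥ star (ket j) = 1 := by
  simp [ket, dotProduct]

theorem pm_mul_star {s : ℂ} (hs : star s * s = 1) (a a' j : Fin 3) :
    pm a a' s j * star (pm a a' s j) = ((if j = a ∨ j = a' then 2⁻¹ else 0 : ℝ) : ℂ) := by
  have hsqrt : ((Real.sqrt 2 : ℂ))⁻¹ * star ((Real.sqrt 2 : ℂ))⁻¹ = ((2⁻¹ : ℝ) : ℂ) := by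
    rw [star_inv₀, Complex.star_def, Complex.conj_ofReal, ← mul_inv, ← Complex.ofReal_mul,
      Real.mul_self_sqrt zero_le_two, Complex.ofReal_inv]
  unfold pm
  split_ifs <;> first
    | tauto
    | exact hsqrt
    | rw [star_mul', mul_mul_mul_comm, mul_comm s, hs, one_mul, hsqrt]
    | simp

theorem sum_ite_or_eq_one {a a' : Fin 3} (hne : a ≠ a') :
    ∑ j : Fin 3, (if j = a ∨ j = a' then 2⁻¹ else 0 : ℝ) = 1 := by
  have hpair : Finset.univ.filter (fun j : Fin 3 => j = a ∨ j = a') = {a, a'} := by ext; simp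
  rw [Finset.sum_ite, Finset.sum_const_zero, Finset.sum_const, hpair, Finset.card_pair hne]
  norm_num

theorem pm_dotProduct_star {s : ℂ} (hs : star s * s = 1) {a a' : Fin 3} (hne : a ≠ a') :
    pm a a' s ⬝ᵥ star (pm a a' s) = 1 := by
  simp only [dotProduct, Pi.star_apply, pm_mul_star hs]
  exact_mod_cast sum_ite_or_eq_one hne

theorem dotProduct_star_comp_sub_right {G : Type*} [AddGroup G] [Fintype G] (v : G → ℂ) (j : G) :
    (fun l => v (l - j)) ⬝ᵥ star (fun l => v (l - j)) = v ⬝ᵥ star v :=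
  Equiv.sum_comp (Equiv.subRight j) fun l => v l * star (v l)

theorem entEnt_gcnot3_tens_ket_left (j : Fin 3) {v : Fin 3 → ℂ} (hv : v ⬝ᵥ star v = 1) :
    entEnt (gcnot3 (tens (ket j) v)) = 0 := by
  rw [gcnot3_tens_ket_left]
  exact entEnt_tens (ket_dotProduct_star j) (by rwa [dotProduct_star_comp_sub_right])

theorem entEnt_gcnot3_tens_pm_ket {s : ℂ} (hs : star s * s = 1) {a a' : Fin 3} (hne : a ≠ a')
    (k : Fin 3) : entEnt (gcnot3 (tens (pm a a' s) (ket k))) = 1 := by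
  rw [entEnt, trSnd_dens_gcnot3_tens_ket]
  simp only [pm_mul_star hs]
  refine SvN_diagonal_eq_one (fun j => ?_) (sum_ite_or_eq_one hne)
  split_ifs <;> simp

theorem not_exists_tens_gcnot3_tens_pm_ket {s : ℂ} (hs : star s * s = 1) {a a' : Fin 3}
    (hne : a ≠ a') (k : Fin 3) :
    ¬ ∃ u v : Fin 3 → ℂ, gcnot3 (tens (pm a a' s) (ket k)) = tens u v := by
  have hpm : ∀ j, j = a ∨ j = a' → pm a a' s j ≠ 0 := fun j hj h => by
    simpa [h, hj] using (pm_mul_star hs a a' j).symm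
  refine not_exists_tens_of_apply (a := a) (a' := a') (b := a + k) (b' := a' + k) ?_ ?_ ?_ <;>
    simp only [gcnot3_tens_ket_right_apply, add_left_inj, Ne.symm hne, if_false]
  · exact hpm a (Or.inl rfl)
  · exact hpm a' (Or.inr rfl)

theorem bennett_eq_tens_ket_left : ∀ i : Fin 9, (i : ℕ) < 5 →
    ∃ j v, v ⬝ᵥ star v = 1 ∧ bennett i = tens (ket j) v := by
  intro i hi
  fin_cases i
  · exact ⟨_, _, ket_dotProduct_star 1, rfl⟩
  all_goals try simp at hi
  all_goals exact ⟨_, _, pm_dotProduct_star (by simp) (by decide), rfl⟩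

theorem bennett_eq_tens_pm_ket : ∀ i : Fin 9, 5 ≤ (i : ℕ) →
    ∃ s a a' k, star s * s = 1 ∧ a ≠ a' ∧ bennett i = tens (pm a a' s) (ket k) := by
  intro i hi
  fin_cases i
  all_goals try simp at hi
  all_goals exact ⟨_, _, _, _, by simp, by decide, rfl⟩

/-- Under the qutrit CNOT, the first five Bennett states stay product states, the last four
become entangled each with entanglement entropy `1`, and the average entanglement entropy
of the transformed equiprobable ensemble is `4/9`. -/
theorem gcnot3_on_bennett_basis :
    (∀ i : Fin 9, (i : ℕ) < 5 → ∃ u v : Fin 3 → ℂ, gcnot3 (bennett i) = tens u v) ∧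
    (∀ i : Fin 9, 5 ≤ (i : ℕ) →
      (¬ ∃ u v : Fin 3 → ℂ, gcnot3 (bennett i) = tens u v) ∧ entEnt (gcnot3 (bennett i)) = 1) ∧
    (∑ i : Fin 9, entEnt (gcnot3 (bennett i))) / 9 = 4 / 9 := by
  have hproduct : ∀ i : Fin 9, (i : ℕ) < 5 →
      (∃ u v : Fin 3 → ℂ, gcnot3 (bennett i) = tens u v) ∧ entEnt (gcnot3 (bennett i)) = 0 := by
    intro i hi
    obtain ⟨j, v, hv, hi⟩ := bennett_eq_tens_ket_left i hi
    rw [hi]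
    exact ⟨⟨_, _, gcnot3_tens_ket_left j v⟩, entEnt_gcnot3_tens_ket_left j hv⟩
  have hentangled : ∀ i : Fin 9, 5 ≤ (i : ℕ) →
      (¬ ∃ u v : Fin 3 → ℂ, gcnot3 (bennett i) = tens u v) ∧ entEnt (gcnot3 (bennett i)) = 1 := by
    intro i hi
    obtain ⟨s, a, a', k, hs, hne, hi⟩ := bennett_eq_tens_pm_ket i hi
    rw [hi]
    exact ⟨not_exists_tens_gcnot3_tens_pm_ket hs hne k, entEnt_gcnot3_tens_pm_ket hs hne k⟩
  have hentropy : ∀ i : Fin 9, entEnt (gcnot3 (bennett i)) = if (i : ℕ) < 5 then 0 else 1 := by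
    intro i
    split_ifs with hi
    · exact (hproduct i hi).2
    · exact (hentangled i (not_lt.mp hi)).2
  refine ⟨fun i hi => (hproduct i hi).1, hentangled, ?_⟩
  simp only [hentropy, Fin.sum_univ_succ]
  norm_num
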